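/- Let Λ : ℝ^d × ℝ^d × ℝ → Mat_{d×d}(ℝ) take values in symmetric matrices, and set F^fr(q,v,S) = −Λ(q,v,S)·v. Let (q(t), p(t), S(t)) be a smooth curve in ℝ^d × ℝ^d × ℝ along which T := ∂H/∂S(q,p,S) ≠ 0 at every time. Then the curve satisfies the Hamiltonian-form equations q̇ = ∂H/∂p, ṗ = −∂H/∂q + F^fr(q, ∂H/∂p, S), (∂H/∂S)·Ṡ = −⟨F^fr(q, ∂H/∂p, S), ∂H/∂p⟩ if and only if for every smooth function F : ℝ^d × ℝ^d × ℝ → ℝ one has d/dt F(q(t),p(t),S(t)) = {F,H} + (F,H;S,H) along the curve, where (F,G;M,N) = (1/T)·(⟨∂N/∂p, Λ ∂G/∂p⟩·(∂F/∂S)·(∂M/∂S) − ⟨∂N/∂p, Λ ∂F/∂p⟩·(∂G/∂S)·(∂M/∂S) + ⟨∂M/∂p, Λ ∂F/∂p⟩·(∂G/∂S)·(∂N/∂S) − ⟨∂M/∂p, Λ ∂G/∂p⟩·(∂F/∂S)·(∂N/∂S)), with Λ evaluated at (q, ∂H/∂p, S), and S in the brackets denotes the coordinate function (q,p,S) ↦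 S. -/

import Mathlib

open scoped RealInnerProductSpace

noncomputable section

/-- Partial gradient of `F (q, p, S)` in the first (position) variable. -/
def pdq {d : ℕ} (F : EuclideanSpace ℝ (Fin d) → EuclideanSpace ℝ (Fin d) → ℝ → ℝ)
    (q p : EuclideanSpace ℝ (Fin d)) (S : ℝ) : EuclideanSpace ℝ (Fin d) :=
  gradient (fun x => F x p S) q

/-- Partial gradient of `F (q, p, S)` in the second (momentum) variable. -/
def pdp {d : ℕ} (F : EuclideanSpace ℝ (Fin d) → EuclideanSpace ℝ (Fin d) → ℝ → ℝ)
    (q p : EuclideanSpace ℝ (Fin d)) (S : ℝ) : EuclideanSpace ℝ (Fin d) :=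
  gradient (fun y => F q y S) p

/-- Partial derivative of `F (q, p, S)` in the last (entropy) variable. -/
def pdS {d : ℕ} (F : EuclideanSpace ℝ (Fin d) → EuclideanSpace ℝ (Fin d) → ℝ → ℝ)
    (q p : EuclideanSpace ℝ (Fin d)) (S : ℝ) : ℝ :=
  deriv (fun s => F q p s) S

/-- Matrix-vector action on Euclidean space. -/
def mulVecE {d : ℕ} (A : Matrix (Fin d) (Fin d) ℝ) (v : EuclideanSpace ℝ (Fin d)) :
    EuclideanSpace ℝ (Fin d) :=
  (WithLp.equiv 2 (Fin d → ℝ)).symm (A.mulVec ((WithLp.equiv 2 (Fin d → ℝ)) v))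

/-- The canonical Poisson bracket `{F, G} = ⟨∂F/∂q, ∂G/∂p⟩ − ⟨∂F/∂p, ∂G/∂q⟩`. -/
def poisson {d : ℕ} (F G : EuclideanSpace ℝ (Fin d) → EuclideanSpace ℝ (Fin d) → ℝ → ℝ)
    (q p : EuclideanSpace ℝ (Fin d)) (S : ℝ) : ℝ :=
  ⟪pdq F q p S, pdp G q p S⟫ - ⟪pdp F q p S, pdq G q p S⟫

/-- The second (Kulkarni–Nomizu type) metriplectic 4-bracket of a simple system
with friction tensor `Λ` (evaluated at `(q, ∂H/∂p, S)`) and `T = ∂H/∂S`. -/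
def bracket4sym {d : ℕ}
    (Λ : EuclideanSpace ℝ (Fin d) → EuclideanSpace ℝ (Fin d) → ℝ → Matrix (Fin d) (Fin d) ℝ)
    (H F G M N : EuclideanSpace ℝ (Fin d) → EuclideanSpace ℝ (Fin d) → ℝ → ℝ)
    (q p : EuclideanSpace ℝ (Fin d)) (S : ℝ) : ℝ :=
  let A := Λ q (pdp H q p S) S
  let T := pdS H q p S
  (1 / T) *
    (⟪pdp N q p S, mulVecE A (pdp G q p S)⟫ * pdS F q p S * pdS M q p S
      - ⟪pdp N q p S, mulVecE A (pdp F q p S)⟫ * pdS G q p S * pdS M q p S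
      + ⟪pdp M q p S, mulVecE A (pdp F q p S)⟫ * pdS G q p S * pdS N q p S
      - ⟪pdp M q p S, mulVecE A (pdp G q p S)⟫ * pdS F q p S * pdS N q p S)

/-- `⟪∇f x, v⟫ = Df(x) v`. -/
lemma inner_grad {d : ℕ} (f : EuclideanSpace ℝ (Fin d) → ℝ) (x v : EuclideanSpace ℝ (Fin d)) :
    ⟪gradient f x, v⟫ = fderiv ℝ f x v := by
  rw [gradient]; exact InnerProductSpace.toDual_symm_apply

/-- Inner product with the gradient of a coordinate projection. -/
lemma inner_grad_proj {d : ℕ} (i : Fin d) (x v : EuclideanSpace ℝ (Fin d)) :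
    ⟪gradient (fun y : EuclideanSpace ℝ (Fin d) => y i) x, v⟫ = v i := by
  rw [inner_grad]
  have h : fderiv ℝ (fun y : EuclideanSpace ℝ (Fin d) => y i) x = EuclideanSpace.proj i :=
    (EuclideanSpace.proj i :
      EuclideanSpace ℝ (Fin d) →L[ℝ] ℝ).fderiv
  rw [h]; rfl

lemma dot_mulVec_comm {d : ℕ} {A : Matrix (Fin d) (Fin d) ℝ} (hA : A.IsSymm)
    (x y : Fin d → ℝ) : dotProduct x (A.mulVec y) = dotProduct y (A.mulVec x) := by
  rw [Matrix.dotProduct_mulVec, ← Matrix.vecMul_transpose, hA.eq, dotProduct_comm]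

/-- Symmetry of the bilinear form associated to a symmetric matrix. -/
lemma inner_mulVecE_comm {d : ℕ} {A : Matrix (Fin d) (Fin d) ℝ} (hA : A.IsSymm)
    (u v : EuclideanSpace ℝ (Fin d)) :
    ⟪u, mulVecE A v⟫ = ⟪v, mulVecE A u⟫ := by
  simp only [mulVecE, PiLp.inner_apply, RCLike.inner_apply, conj_trivial,
    WithLp.equiv_symm_apply, PiLp.toLp_apply, WithLp.equiv_apply]
  simpa only [dotProduct, mul_comm] using dot_mulVec_comm hA (WithLp.ofLp u) (WithLp.ofLp v)

/-- Chain rule along a smooth curve, in gradient form. -/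
lemma chain3 {d : ℕ} (F : EuclideanSpace ℝ (Fin d) → EuclideanSpace ℝ (Fin d) → ℝ → ℝ)
    (hF : ContDiff ℝ (⊤ : ℕ∞) (fun x : EuclideanSpace ℝ (Fin d) × EuclideanSpace ℝ (Fin d) × ℝ =>
      F x.1 x.2.1 x.2.2))
    (q p : ℝ → EuclideanSpace ℝ (Fin d)) (S : ℝ → ℝ)
    (hq : ContDiff ℝ (⊤ : ℕ∞) q) (hp : ContDiff ℝ (⊤ : ℕ∞) p) (hS : ContDiff ℝ (⊤ : ℕ∞) S) (t : ℝ) :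
    HasDerivAt (fun τ => F (q τ) (p τ) (S τ))
      (⟪pdq F (q t) (p t) (S t), deriv q t⟫ + ⟪pdp F (q t) (p t) (S t), deriv p t⟫
        + pdS F (q t) (p t) (S t) * deriv S t) t := by
  set x : EuclideanSpace ℝ (Fin d) × EuclideanSpace ℝ (Fin d) × ℝ := (q t, p t, S t) with hx
  set Ft : EuclideanSpace ℝ (Fin d) × EuclideanSpace ℝ (Fin d) × ℝ → ℝ :=
    fun x => F x.1 x.2.1 x.2.2 with hFt
  set D := fderiv ℝ Ft x with hD
  have hFd : HasFDerivAt Ft D x := (hF.differentiable (by simp) x).hasFDerivAt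
  have hqd : HasDerivAt q (deriv q t) t := (hq.differentiable (by simp) t).hasDerivAt
  have hpd : HasDerivAt p (deriv p t) t := (hp.differentiable (by simp) t).hasDerivAt
  have hSd : HasDerivAt S (deriv S t) t := (hS.differentiable (by simp) t).hasDerivAt
  have hΦ : HasDerivAt (fun τ => ((q τ, p τ, S τ) :
      EuclideanSpace ℝ (Fin d) × EuclideanSpace ℝ (Fin d) × ℝ))
      (deriv q t, deriv p t, deriv S t) t := hqd.prodMk (hpd.prodMk hSd)
  have hcomp := hFd.comp_hasDerivAt t hΦ
  have h1 : ∀ a : EuclideanSpace ℝ (Fin d),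
      ⟪pdq F (q t) (p t) (S t), a⟫ = D (a, 0, 0) := by
    intro a
    have hincl : HasFDerivAt (fun y : EuclideanSpace ℝ (Fin d) =>
        ((y, (p t, S t)) : EuclideanSpace ℝ (Fin d) × EuclideanSpace ℝ (Fin d) × ℝ))
        (ContinuousLinearMap.inl ℝ _ _) (q t) := hasFDerivAt_prodMk_left _ _
    have h : fderiv ℝ (fun y => F y (p t) (S t)) (q t)
        = D.comp (ContinuousLinearMap.inl ℝ _ _) := by have := (hFd.comp (q t) hincl).fderiv; exact this
    rw [pdq, inner_grad, h]
    rfl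
  have h2 : ∀ b : EuclideanSpace ℝ (Fin d),
      ⟪pdp F (q t) (p t) (S t), b⟫ = D (0, b, 0) := by
    intro b
    have hincl : HasFDerivAt (fun y : EuclideanSpace ℝ (Fin d) =>
        ((q t, (y, S t)) : EuclideanSpace ℝ (Fin d) × EuclideanSpace ℝ (Fin d) × ℝ))
        ((ContinuousLinearMap.inr ℝ _ _).comp (ContinuousLinearMap.inl ℝ _ _)) (p t) :=
      (hasFDerivAt_prodMk_right _ _).comp (p t) (hasFDerivAt_prodMk_left _ _)
    have h : fderiv ℝ (fun y => F (q t) y (S t)) (p t)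
        = D.comp ((ContinuousLinearMap.inr ℝ _ _).comp (ContinuousLinearMap.inl ℝ _ _)) :=
      by have := (hFd.comp (p t) hincl).fderiv; exact this
    rw [pdp, inner_grad, h]
    rfl
  have h3 : ∀ c : ℝ, pdS F (q t) (p t) (S t) * c = D (0, 0, c) := by
    intro c
    have hincl : HasDerivAt (fun s : ℝ =>
        ((q t, (p t, s)) : EuclideanSpace ℝ (Fin d) × EuclideanSpace ℝ (Fin d) × ℝ))
        (0, 0, 1) (S t) :=
      (hasDerivAt_const _ _).prodMk ((hasDerivAt_const _ _).prodMk (hasDerivAt_id _))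
    have h : deriv (fun s => F (q t) (p t) s) (S t) = D (0, 0, 1) :=
      by have := (hFd.comp_hasDerivAt (S t) hincl).deriv; exact this
    rw [pdS, h]
    have h0 : (0, 0, c) = c • ((0, 0, 1) :
        EuclideanSpace ℝ (Fin d) × EuclideanSpace ℝ (Fin d) × ℝ) := by
      simp [Prod.smul_def]
    rw [h0, map_smul, smul_eq_mul]
    ring
  have hsum : D (deriv q t, deriv p t, deriv S t)
      = D (deriv q t, 0, 0) + D (0, deriv p t, 0) + D (0, 0, deriv S t) := by
    rw [← map_add, ← map_add]
    congr 1 <;> simp [Prod.ext_iff]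
  rw [h1, h2, h3, ← hsum]
  exact hcomp

/-- For a friction force `F^fr = −Λ·v` with `Λ` symmetric, a curve satisfies the
Hamiltonian-form equations of a simple thermodynamic system iff every smooth
observable evolves as `Ḟ = {F,H} + (F,H;S,H)` with the symmetric 4-bracket. -/
theorem simple_system_second_metriplectic {d : ℕ}
    (H : EuclideanSpace ℝ (Fin d) → EuclideanSpace ℝ (Fin d) → ℝ → ℝ)
    (Λ : EuclideanSpace ℝ (Fin d) → EuclideanSpace ℝ (Fin d) → ℝ → Matrix (Fin d) (Fin d) ℝ)
    (hΛ : ∀ q v S, (Λ q v S).IsSymm)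
    (Ffr : EuclideanSpace ℝ (Fin d) → EuclideanSpace ℝ (Fin d) → ℝ → EuclideanSpace ℝ (Fin d))
    (hFfr : ∀ q v S, Ffr q v S = - mulVecE (Λ q v S) v)
    (hH : ContDiff ℝ (⊤ : ℕ∞) (fun x : EuclideanSpace ℝ (Fin d) × EuclideanSpace ℝ (Fin d) × ℝ =>
      H x.1 x.2.1 x.2.2))
    (q p : ℝ → EuclideanSpace ℝ (Fin d)) (S : ℝ → ℝ)
    (hq : ContDiff ℝ (⊤ : ℕ∞) q) (hp : ContDiff ℝ (⊤ : ℕ∞) p) (hS : ContDiff ℝ (⊤ : ℕ∞) S)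
    (hT : ∀ t : ℝ, pdS H (q t) (p t) (S t) ≠ 0) :
    (∀ t : ℝ,
        deriv q t = pdp H (q t) (p t) (S t)
        ∧ deriv p t = - pdq H (q t) (p t) (S t)
            + Ffr (q t) (pdp H (q t) (p t) (S t)) (S t)
        ∧ pdS H (q t) (p t) (S t) * deriv S t
            = - ⟪Ffr (q t) (pdp H (q t) (p t) (S t)) (S t), pdp H (q t) (p t) (S t)⟫)
    ↔ (∀ F : EuclideanSpace ℝ (Fin d) → EuclideanSpace ℝ (Fin d) → ℝ → ℝ,
        ContDiff ℝ (⊤ : ℕ∞) (fun x : EuclideanSpace ℝ (Fin d) × EuclideanSpace ℝ (Fin d) × ℝ =>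
          F x.1 x.2.1 x.2.2) →
        ∀ t : ℝ,
          deriv (fun τ => F (q τ) (p τ) (S τ)) t
            = poisson F H (q t) (p t) (S t)
              + bracket4sym Λ H F H (fun _ _ s => s) H (q t) (p t) (S t)) := by
  have hM1 : ∀ (a b : EuclideanSpace ℝ (Fin d)) (s : ℝ),
      pdp (fun _ _ s => s) a b s = 0 := by
    intro a b s; rw [pdp]; exact gradient_const _ _
  have hM2 : ∀ (a b : EuclideanSpace ℝ (Fin d)) (s : ℝ),
      pdS (fun _ _ s => s) a b s = 1 := by
    intro a b s; rw [pdS]; simp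
  constructor
  · intro heq F hFsm t
    obtain ⟨e1, e2, e3⟩ := heq t
    rw [(chain3 F hFsm q p S hq hp hS t).deriv]
    set u := pdp H (q t) (p t) (S t) with hu
    set T := pdS H (q t) (p t) (S t) with hTdef
    set A := Λ (q t) u (S t) with hAdef
    have hT0 : T ≠ 0 := hT t
    rw [hFfr] at e2 e3
    have hS' : deriv S t = ⟪u, mulVecE A u⟫ / T := by
      rw [eq_div_iff hT0]
      rw [inner_neg_left, neg_neg, real_inner_comm] at e3
      linarith [e3]
    rw [e1, e2, hS']
    simp only [poisson, bracket4sym, hM1, hM2]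
    simp only [inner_add_right, inner_neg_right, inner_zero_left, mul_one, mul_zero,
      zero_mul, add_zero, sub_zero, zero_sub, zero_add]
    have hsym : ⟪pdp F (q t) (p t) (S t), mulVecE A u⟫
        = ⟪u, mulVecE A (pdp F (q t) (p t) (S t))⟫ := inner_mulVecE_comm (hΛ _ _ _) _ _
    rw [hsym]
    simp only [← hu, ← hTdef, ← hAdef]
    field_simp
    ring
  · intro h t
    set u := pdp H (q t) (p t) (S t) with hu
    set g := pdq H (q t) (p t) (S t) with hg
    set T := pdS H (q t) (p t) (S t) with hTdef
    set A := Λ (q t) u (S t) with hAdef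
    have hT0 : T ≠ 0 := hT t
    have hmz : ∀ B : Matrix (Fin d) (Fin d) ℝ, mulVecE B (0 : EuclideanSpace ℝ (Fin d)) = 0 := by
      intro B; simp [mulVecE]
    -- first equation
    have e1 : deriv q t = u := by
      ext i
      have hFsm : ContDiff ℝ (⊤ : ℕ∞)
          (fun x : EuclideanSpace ℝ (Fin d) × EuclideanSpace ℝ (Fin d) × ℝ => x.1 i) :=
        (EuclideanSpace.proj i :
          EuclideanSpace ℝ (Fin d) →L[ℝ] ℝ).contDiff.comp contDiff_fst
      have hh := h (fun x _ _ => x i) hFsm t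
      rw [(chain3 (fun x _ _ => x i) hFsm q p S hq hp hS t).deriv] at hh
      have k1 : pdq (fun x _ _ => x i) (q t) (p t) (S t)
          = gradient (fun y : EuclideanSpace ℝ (Fin d) => y i) (q t) := rfl
      have k2 : pdp (fun x _ _ => x i) (q t) (p t) (S t) = 0 := by
        rw [pdp]; exact gradient_const _ _
      have k3 : pdS (fun x _ _ => x i) (q t) (p t) (S t) = 0 := by
        rw [pdS]; simp
      simp only [poisson, bracket4sym, hM1, hM2, k1, k2, k3, hmz, inner_grad_proj,
        inner_zero_left, inner_zero_right, mul_zero, zero_mul, mul_one, one_mul,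
        add_zero, zero_add, sub_zero, zero_sub, neg_zero] at hh
      simpa using hh
    have e2 : deriv p t = - g + Ffr (q t) u (S t) := by
      ext i
      have hFsm : ContDiff ℝ (⊤ : ℕ∞)
          (fun x : EuclideanSpace ℝ (Fin d) × EuclideanSpace ℝ (Fin d) × ℝ => x.2.1 i) :=
        (EuclideanSpace.proj i :
          EuclideanSpace ℝ (Fin d) →L[ℝ] ℝ).contDiff.comp (contDiff_fst.comp contDiff_snd)
      have hh := h (fun _ y _ => y i) hFsm t
      rw [(chain3 (fun _ y _ => y i) hFsm q p S hq hp hS t).deriv] at hh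
      have k1 : pdq (fun _ y _ => y i) (q t) (p t) (S t) = 0 := by
        rw [pdq]; exact gradient_const _ _
      have k2 : pdp (fun _ y _ => y i) (q t) (p t) (S t)
          = gradient (fun y : EuclideanSpace ℝ (Fin d) => y i) (p t) := rfl
      have k3 : pdS (fun _ y _ => y i) (q t) (p t) (S t) = 0 := by
        rw [pdS]; simp
      have ksym : ⟪u, mulVecE A (gradient
            (fun y : EuclideanSpace ℝ (Fin d) => y i) (p t))⟫
          = mulVecE A u i := by
        rw [inner_mulVecE_comm (hΛ _ _ _), inner_grad_proj]
      simp only [poisson, bracket4sym, hM1, hM2, k1, k2, k3, hmz, ksym, inner_grad_proj,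
        inner_zero_left, inner_zero_right, mul_zero, zero_mul, mul_one, one_mul,
        add_zero, zero_add, sub_zero, zero_sub, neg_zero] at hh
      rw [hFfr]
      have : (- g + - mulVecE A u) i = - g i - mulVecE A u i := by
        simp [PiLp.add_apply, PiLp.neg_apply, sub_eq_add_neg]
      rw [← hTdef, ← hg] at hh
      simp only [← hu, ← hAdef, ksym] at hh
      rw [this, hh]
      field_simp
      ring
    refine ⟨e1, e2, ?_⟩
    have hFsm : ContDiff ℝ (⊤ : ℕ∞)
        (fun x : EuclideanSpace ℝ (Fin d) × EuclideanSpace ℝ (Fin d) × ℝ => x.2.2) :=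
      contDiff_snd.comp contDiff_snd
    have hh := h (fun _ _ s => s) hFsm t
    rw [(chain3 (fun _ _ s => s) hFsm q p S hq hp hS t).deriv] at hh
    have k1 : pdq (fun _ _ s => s) (q t) (p t) (S t) = 0 := by
      rw [pdq]; exact gradient_const _ _
    simp only [poisson, bracket4sym, hM1, hM2, k1, hmz,
      inner_zero_left, inner_zero_right, mul_zero, zero_mul, mul_one, one_mul,
      add_zero, zero_add, sub_zero, zero_sub, neg_zero] at hh
    simp only [← hu, ← hTdef] at hh
    rw [hFfr, inner_neg_left, neg_neg, real_inner_comm, hh]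
    field_simp
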